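/- Let n ≥ 1, let A = (a^{ij}) be a symmetric positive-definite n×n real matrix, let b ∈ ℝⁿ, and let H : ℝ → ℝ → ℝ be twice continuously differentiable on an open set U ⊆ (0,∞) × ℝ. For y ∈ ℝⁿ set α(y) = √(yᵀAy), β(y) = bᵀy, Y(y) = Ay, and F(y) = (1/2)H(α(y), β(y)). Then at every y ≠ 0 with (α(y), β(y)) ∈ U, the Hessian of F is given by g^{ij} := ∂²F/∂y_i∂y_j = ρ·a^{ij} + ρ₀·b^i b^j + ρ₋₁·(b^i Y^j + b^j Y^i) + ρ₋₂·Y^i Y^j, where ρ = (1/(2α))H_α, ρ₀ = (1/2)H_ββ, ρ₋₁ = (1/(2α))H_αβ, ρ₋₂ = (1/(2α²))(H_αα − α⁻¹H_α) are evaluated at (α(y), β(y)). -/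

import Mathlib

open Matrix

/-- Partial derivative with respect to the first variable (α). -/
noncomputable def dA (H : ℝ → ℝ → ℝ) : ℝ → ℝ → ℝ := fun a b => deriv (fun s => H s b) a

/-- Partial derivative with respect to the second variable (β). -/
noncomputable def dB (H : ℝ → ℝ → ℝ) : ℝ → ℝ → ℝ := fun a b => deriv (fun t => H a t) b

/-- Partial derivative of a function on `ℝⁿ` with respect to the `i`-th coordinate. -/
noncomputable def pder {n : ℕ} (i : Fin n) (F : (Fin n → ℝ) → ℝ) : (Fin n → ℝ) → ℝ :=
  fun y => deriv (fun t => F (Function.update y i t)) (y i)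

/-!
Everything is computed along coordinate lines `t ↦ update y j t`. Where `yᵀAy > 0` and `H` is
differentiable at `(α, β)`, the chain rule together with `∂_j α = Y_j / α` (this uses the symmetry
of `A`) and `∂_j β = b_j` gives `∂_i F = ½ (Y_i / α · H_α + b_i H_β)`. This holds on a neighbourhood
of `y`, so `∂_j ∂_i F(y)` is the derivative of that expression along the `j`-th line; expanding it
with the chain rule for `H_α` and `H_β`, and identifying `H_βα = H_αβ` by Schwarz's theorem for the
`C²` function `H`, gives the formula.
-/

open Filter Topology Function

theorem hasFDerivAt_fderiv_apply {E F : Type*} [NormedAddCommGroup E] [NormedSpace ℝ E]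
    [NormedAddCommGroup F] [NormedSpace ℝ F] {φ : E → F} {p : E} (hφ : ContDiffAt ℝ 2 φ p)
    (v : E) :
    HasFDerivAt (fun q => fderiv ℝ φ q v) ((fderiv ℝ (fderiv ℝ φ) p).flip v) p := by
  simpa using ((hφ.fderiv_right (m := 1) le_rfl).differentiableAt one_ne_zero).hasFDerivAt.clm_apply
    (hasFDerivAt_const v p)

section TwoVariables

variable {H : ℝ → ℝ → ℝ} {a b : ℝ}

theorem dA_eq_of_hasFDerivAt {L : ℝ × ℝ →L[ℝ] ℝ} (h : HasFDerivAt (uncurry H) L (a, b)) :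
    dA H a b = L (1, 0) :=
  (HasFDerivAt.comp_hasDerivAt (f := fun s => (s, b)) a h
    ((hasDerivAt_id a).prodMk (hasDerivAt_const a b))).deriv

theorem dB_eq_of_hasFDerivAt {L : ℝ × ℝ →L[ℝ] ℝ} (h : HasFDerivAt (uncurry H) L (a, b)) :
    dB H a b = L (0, 1) :=
  (HasFDerivAt.comp_hasDerivAt (f := fun t => (a, t)) b h
    ((hasDerivAt_const b a).prodMk (hasDerivAt_id b))).deriv

theorem HasDerivAt.comp_uncurry {f g : ℝ → ℝ} {f' g' t : ℝ}
    (hH : DifferentiableAt ℝ (uncurry H) (f t, g t)) (hf : HasDerivAt f f' t)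
    (hg : HasDerivAt g g' t) :
    HasDerivAt (fun s => H (f s) (g s)) (f' * dA H (f t) (g t) + g' * dB H (f t) (g t)) t := by
  have hfg : (f', g') = f' • ((1 : ℝ), (0 : ℝ)) + g' • ((0 : ℝ), (1 : ℝ)) := by simp
  have h := hH.hasFDerivAt.comp_hasDerivAt t (hf.prodMk hg)
  rw [hfg, map_add, map_smul, map_smul, ← dA_eq_of_hasFDerivAt hH.hasFDerivAt,
    ← dB_eq_of_hasFDerivAt hH.hasFDerivAt] at h
  exact h

theorem hasFDerivAt_uncurry_dA (hH : ContDiffAt ℝ 2 (uncurry H) (a, b)) :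
    HasFDerivAt (uncurry (dA H)) ((fderiv ℝ (fderiv ℝ (uncurry H)) (a, b)).flip (1, 0)) (a, b) := by
  refine (hasFDerivAt_fderiv_apply hH (1, 0)).congr_of_eventuallyEq ?_
  filter_upwards [hH.eventually (by simp)] with q hq
  exact dA_eq_of_hasFDerivAt (hq.differentiableAt two_ne_zero).hasFDerivAt

theorem hasFDerivAt_uncurry_dB (hH : ContDiffAt ℝ 2 (uncurry H) (a, b)) :
    HasFDerivAt (uncurry (dB H)) ((fderiv ℝ (fderiv ℝ (uncurry H)) (a, b)).flip (0, 1)) (a, b) := by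
  refine (hasFDerivAt_fderiv_apply hH (0, 1)).congr_of_eventuallyEq ?_
  filter_upwards [hH.eventually (by simp)] with q hq
  exact dB_eq_of_hasFDerivAt (hq.differentiableAt two_ne_zero).hasFDerivAt

theorem dB_dA_eq_dA_dB (hH : ContDiffAt ℝ 2 (uncurry H) (a, b)) :
    dB (dA H) a b = dA (dB H) a b := by
  rw [dB_eq_of_hasFDerivAt (hasFDerivAt_uncurry_dA hH),
    dA_eq_of_hasFDerivAt (hasFDerivAt_uncurry_dB hH)]
  exact hH.isSymmSndFDerivAt (by simp) _ _

end TwoVariables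

section Derivatives

variable {𝕜 ι : Type*} [NontriviallyNormedField 𝕜] [Fintype ι] {f g : 𝕜 → ι → 𝕜} {f' g' : ι → 𝕜}
  {t : 𝕜}

theorem HasDerivAt.dotProduct (hf : HasDerivAt f f' t) (hg : HasDerivAt g g' t) :
    HasDerivAt (fun s => f s ⬝ᵥ g s) (f' ⬝ᵥ g t + f t ⬝ᵥ g') t := by
  have h : HasDerivAt (fun s => ∑ k, f s k * g s k) (∑ k, (f' k * g t k + f t k * g' k)) t :=
    HasDerivAt.fun_sum fun k _ => (hasDerivAt_pi.1 hf k).fun_mul (hasDerivAt_pi.1 hg k)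
  rw [Finset.sum_add_distrib] at h
  exact h

theorem HasDerivAt.mulVec (A : Matrix ι ι 𝕜) (hf : HasDerivAt f f' t) :
    HasDerivAt (fun s => A *ᵥ f s) (A *ᵥ f') t :=
  hasDerivAt_pi.2 fun k => by
    have h := (hasDerivAt_const t (A k)).dotProduct hf
    rw [zero_dotProduct, zero_add] at h
    exact h

end Derivatives

section Lines

variable {ι : Type*} [Fintype ι] [DecidableEq ι] (z : ι → ℝ) (i : ι)

theorem hasDerivAt_dotProduct_update (b : ι → ℝ) :
    HasDerivAt (fun t => b ⬝ᵥ update z i t) (b i) (z i) := by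
  simpa using (hasDerivAt_const (z i) b).dotProduct (hasDerivAt_update z i (z i))

theorem hasDerivAt_mulVec_update_apply (A : Matrix ι ι ℝ) (k : ι) :
    HasDerivAt (fun t => (A *ᵥ update z i t) k) (A k i) (z i) := by
  simpa using hasDerivAt_pi.1 ((hasDerivAt_update z i (z i)).mulVec A) k

theorem hasDerivAt_sqrt_quadForm_update {A : Matrix ι ι ℝ} (hA : A.IsSymm)
    (hq : 0 < z ⬝ᵥ A *ᵥ z) :
    HasDerivAt (fun t => √(update z i t ⬝ᵥ A *ᵥ update z i t))
      ((A *ᵥ z) i / √(z ⬝ᵥ A *ᵥ z)) (z i) := by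
  have hl := hasDerivAt_update z i (z i)
  have h := (hl.dotProduct (hl.mulVec A)).sqrt (by simpa using hq.ne')
  simp only [update_eq_self, single_dotProduct, one_mul, mulVec_single_one] at h
  have hcol : z ⬝ᵥ A.col i = (A *ᵥ z) i := by
    simp only [dotProduct, mulVec, col_apply, hA.apply i, mul_comm]
  refine h.congr_deriv ?_
  rw [hcol]
  field_simp
  ring

end Lines

theorem Filter.EventuallyEq.pder_eq {n : ℕ} {F G : (Fin n → ℝ) → ℝ} {y : Fin n → ℝ}
    (h : F =ᶠ[𝓝 y] G) (j : Fin n) : pder j F y = pder j G y := by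
  have hl : Tendsto (update y j) (𝓝 (y j)) (𝓝 y) := by
    simpa using (hasDerivAt_update y j (y j)).continuousAt.tendsto
  exact (h.comp_tendsto hl).deriv_eq

section AlphaBeta

variable {n : ℕ} {A : Matrix (Fin n) (Fin n) ℝ} {b : Fin n → ℝ} {H : ℝ → ℝ → ℝ}

noncomputable def alphaBetaGrad (A : Matrix (Fin n) (Fin n) ℝ) (b : Fin n → ℝ)
    (H : ℝ → ℝ → ℝ) (i : Fin n) (z : Fin n → ℝ) : ℝ :=
  1 / 2 * ((A *ᵥ z) i / √(z ⬝ᵥ A *ᵥ z) * dA H (√(z ⬝ᵥ A *ᵥ z)) (b ⬝ᵥ z)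
    + b i * dB H (√(z ⬝ᵥ A *ᵥ z)) (b ⬝ᵥ z))

theorem pder_alphaBeta_eq_alphaBetaGrad (hA : A.IsSymm) {z : Fin n → ℝ} (hq : 0 < z ⬝ᵥ A *ᵥ z)
    (hH : DifferentiableAt ℝ (uncurry H) (√(z ⬝ᵥ A *ᵥ z), b ⬝ᵥ z)) (i : Fin n) :
    pder i (fun z => 1 / 2 * H (√(z ⬝ᵥ A *ᵥ z)) (b ⬝ᵥ z)) z = alphaBetaGrad A b H i z := by
  have h := (HasDerivAt.comp_uncurry (by simpa using hH)
    (hasDerivAt_sqrt_quadForm_update z i hA hq) (hasDerivAt_dotProduct_update z i b)).const_mul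
    (1 / 2)
  simp only [update_eq_self] at h
  rw [pder, h.deriv, alphaBetaGrad]

theorem pder_alphaBeta_eventuallyEq_alphaBetaGrad (hA : A.IsSymm) {y : Fin n → ℝ}
    (hq : 0 < y ⬝ᵥ A *ᵥ y) (hH : ContDiffAt ℝ 2 (uncurry H) (√(y ⬝ᵥ A *ᵥ y), b ⬝ᵥ y))
    (i : Fin n) :
    pder i (fun z => 1 / 2 * H (√(z ⬝ᵥ A *ᵥ z)) (b ⬝ᵥ z)) =ᶠ[𝓝 y] alphaBetaGrad A b H i := by
  have hq' : ContinuousAt (fun z : Fin n → ℝ => z ⬝ᵥ A *ᵥ z) y := by fun_prop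
  have hΦ : ContinuousAt (fun z : Fin n → ℝ => (√(z ⬝ᵥ A *ᵥ z), b ⬝ᵥ z)) y := by fun_prop
  filter_upwards [hq'.eventually (lt_mem_nhds hq), hΦ.eventually (hH.eventually (by simp))]
    with z hqz hHz
  exact pder_alphaBeta_eq_alphaBetaGrad hA hqz (hHz.differentiableAt two_ne_zero) i

theorem pder_alphaBetaGrad (hA : A.IsSymm) {y : Fin n → ℝ} (hq : 0 < y ⬝ᵥ A *ᵥ y)
    (hH : ContDiffAt ℝ 2 (uncurry H) (√(y ⬝ᵥ A *ᵥ y), b ⬝ᵥ y)) (i j : Fin n) :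
    pder j (alphaBetaGrad A b H i) y =
      1 / (2 * √(y ⬝ᵥ A *ᵥ y)) * dA H (√(y ⬝ᵥ A *ᵥ y)) (b ⬝ᵥ y) * A i j
      + 1 / 2 * dB (dB H) (√(y ⬝ᵥ A *ᵥ y)) (b ⬝ᵥ y) * b i * b j
      + 1 / (2 * √(y ⬝ᵥ A *ᵥ y)) * dA (dB H) (√(y ⬝ᵥ A *ᵥ y)) (b ⬝ᵥ y)
          * (b i * (A *ᵥ y) j + b j * (A *ᵥ y) i)
      + 1 / (2 * √(y ⬝ᵥ A *ᵥ y) ^ 2)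
          * (dA (dA H) (√(y ⬝ᵥ A *ᵥ y)) (b ⬝ᵥ y)
              - (√(y ⬝ᵥ A *ᵥ y))⁻¹ * dA H (√(y ⬝ᵥ A *ᵥ y)) (b ⬝ᵥ y))
          * (A *ᵥ y) i * (A *ᵥ y) j := by
  have hα := hasDerivAt_sqrt_quadForm_update y j hA hq
  have hβ := hasDerivAt_dotProduct_update y j b
  have hαne : √(y ⬝ᵥ A *ᵥ y) ≠ 0 := (Real.sqrt_pos.2 hq).ne'
  have hdA := HasDerivAt.comp_uncurry (by simpa using (hasFDerivAt_uncurry_dA hH).differentiableAt)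
    hα hβ
  have hdB := HasDerivAt.comp_uncurry (by simpa using (hasFDerivAt_uncurry_dB hH).differentiableAt)
    hα hβ
  have h := ((((hasDerivAt_mulVec_update_apply y j A i).fun_div hα (by simpa using hαne)).fun_mul
    hdA).fun_add ((hasDerivAt_const (y j) (b i)).fun_mul hdB)).const_mul (1 / 2)
  simp only [update_eq_self] at h
  unfold pder alphaBetaGrad
  rw [h.deriv, dB_dA_eq_dA_dB hH]
  field_simp
  ring

end AlphaBeta

theorem fundamental_tensor_alpha_beta_general
    (n : ℕ)
    (A : Matrix (Fin n) (Fin n) ℝ) (hA : A.PosDef) (hAsymm : A.IsSymm)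
    (b : Fin n → ℝ)
    (H : ℝ → ℝ → ℝ) (U : Set (ℝ × ℝ)) (hUopen : IsOpen U)
    (hH : ContDiffOn ℝ 2 (Function.uncurry H) U)
    (y : Fin n → ℝ) (hy : y ≠ 0)
    (hmem : (Real.sqrt (y ⬝ᵥ A.mulVec y), b ⬝ᵥ y) ∈ U) :
    ∀ i j : Fin n,
      pder j (pder i (fun z => (1 / 2) * H (Real.sqrt (z ⬝ᵥ A.mulVec z)) (b ⬝ᵥ z))) y =
        (1 / (2 * Real.sqrt (y ⬝ᵥ A.mulVec y)))
            * dA H (Real.sqrt (y ⬝ᵥ A.mulVec y)) (b ⬝ᵥ y) * A i j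
        + (1 / 2) * dB (dB H) (Real.sqrt (y ⬝ᵥ A.mulVec y)) (b ⬝ᵥ y) * b i * b j
        + (1 / (2 * Real.sqrt (y ⬝ᵥ A.mulVec y)))
            * dA (dB H) (Real.sqrt (y ⬝ᵥ A.mulVec y)) (b ⬝ᵥ y)
            * (b i * A.mulVec y j + b j * A.mulVec y i)
        + (1 / (2 * Real.sqrt (y ⬝ᵥ A.mulVec y) ^ 2))
            * (dA (dA H) (Real.sqrt (y ⬝ᵥ A.mulVec y)) (b ⬝ᵥ y)
                - (Real.sqrt (y ⬝ᵥ A.mulVec y))⁻¹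
                    * dA H (Real.sqrt (y ⬝ᵥ A.mulVec y)) (b ⬝ᵥ y))
            * A.mulVec y i * A.mulVec y j := by
  intro i j
  have hq : 0 < y ⬝ᵥ A *ᵥ y := by simpa using hA.dotProduct_mulVec_pos hy
  have hH2 := hH.contDiffAt (hUopen.mem_nhds hmem)
  rw [(pder_alphaBeta_eventuallyEq_alphaBetaGrad hAsymm hq hH2 i).pder_eq j]
  exact pder_alphaBetaGrad hAsymm hq hH2 i j

/-- The fundamental tensor of a Cartan space with (α,β)-metric: the Hessian of
`F = (1/2)H(α, β)` is `g^{ij} = ρ a^{ij} + ρ₀ b^i b^j + ρ₋₁(b^i Y^j + b^j Y^i) + ρ₋₂ Y^i Y^j`. -/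
theorem fundamental_tensor_alpha_beta
    (n : ℕ) (hn : 1 ≤ n)
    (A : Matrix (Fin n) (Fin n) ℝ) (hA : A.PosDef) (hAsymm : A.IsSymm)
    (b : Fin n → ℝ)
    (H : ℝ → ℝ → ℝ) (U : Set (ℝ × ℝ)) (hUopen : IsOpen U)
    (hUsub : U ⊆ Set.Ioi (0:ℝ) ×ˢ (Set.univ : Set ℝ))
    (hH : ContDiffOn ℝ 2 (Function.uncurry H) U)
    (y : Fin n → ℝ) (hy : y ≠ 0)
    (hmem : (Real.sqrt (y ⬝ᵥ A.mulVec y), b ⬝ᵥ y) ∈ U) :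
    ∀ i j : Fin n,
      pder j (pder i (fun z => (1 / 2) * H (Real.sqrt (z ⬝ᵥ A.mulVec z)) (b ⬝ᵥ z))) y =
        (1 / (2 * Real.sqrt (y ⬝ᵥ A.mulVec y)))
            * dA H (Real.sqrt (y ⬝ᵥ A.mulVec y)) (b ⬝ᵥ y) * A i j
        + (1 / 2) * dB (dB H) (Real.sqrt (y ⬝ᵥ A.mulVec y)) (b ⬝ᵥ y) * b i * b j
        + (1 / (2 * Real.sqrt (y ⬝ᵥ A.mulVec y)))
            * dA (dB H) (Real.sqrt (y ⬝ᵥ A.mulVec y)) (b ⬝ᵥ y)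
            * (b i * A.mulVec y j + b j * A.mulVec y i)
        + (1 / (2 * Real.sqrt (y ⬝ᵥ A.mulVec y) ^ 2))
            * (dA (dA H) (Real.sqrt (y ⬝ᵥ A.mulVec y)) (b ⬝ᵥ y)
                - (Real.sqrt (y ⬝ᵥ A.mulVec y))⁻¹
                    * dA H (Real.sqrt (y ⬝ᵥ A.mulVec y)) (b ⬝ᵥ y))
            * A.mulVec y i * A.mulVec y j :=
  fundamental_tensor_alpha_beta_general n A hA hAsymm b H U hUopen hH y hy hmem
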